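/- arXiv:2004.02471 — 4 statements merged into one kernel-verified Lean document; each statement's English description precedes it below -/
import Mathlib

section
/- Let N ≥ 3, let u = (u_1, …, u_N) be a finite sequence of real numbers, let 0 < s ≤ 1 and p = 1/s, and let i₀ ∈ {2, …, N−1} be an index such that either u_{i₀−1} < u_{i₀} < u_{i₀+1} or u_{i₀−1} > u_{i₀} > u_{i₀+1}. Let v = (u_1, …, u_{i₀−1}, u_{i₀+1}, …, u_N) be the sequence obtained by deleting the entry u_{i₀}. Then TV^s u = TV^s v, i.e. the fractional total variation of the finite sequence is unchanged by removing an interior entry at which the sequence is locally strictly monotone. -/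
open scoped ENNReal

/-- The `s`-fractional total variation of a finite sequence `u 0, …, u (N-1)` of real
numbers: the supremum over all subdivisions (strictly increasing maps into `{0, …, N-1}`)
of the sum of `|u (σ (i+1)) - u (σ i)| ^ (1/s)`. -/
noncomputable def TVsSeq (s : ℝ) (N : ℕ) (u : ℕ → ℝ) : ℝ≥0∞ :=
  ⨆ (k : ℕ) (σ : Fin (k + 1) → ℕ) (_ : StrictMono σ) (_ : ∀ i, σ i < N),
    ∑ i : Fin k, ENNReal.ofReal (|u (σ i.succ) - u (σ i.castSucc)| ^ (1 / s))

/-!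
A subdivision passing through the interior index `c` can be changed into one avoiding `c`
without decreasing its sum. If `u c` lies between the values at the neighbours of `c` in the
subdivision, drop `c`: `t ↦ t ^ p` is superadditive for `p ≥ 1`. If `u c` lies above both
(below both), replace `c` by the one of `c - 1`, `c + 1` with the larger (smaller) value, which
is not already in the subdivision and moves both neighbouring jumps further apart. The
subdivisions avoiding `c` are exactly the images of the subdivisions of the shortened sequence
under the increasing enumeration `succAbove c` of `ℕ \ {c}`.
-/

namespace List

variable {α β M : Type*}

section AddCommMonoid

variable [AddCommMonoid M] (f : α → α → M)

def chainSum : List α → M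
  | a :: b :: l => f a b + chainSum (b :: l)
  | _ => 0

@[simp] theorem chainSum_nil : chainSum f [] = 0 := rfl

@[simp] theorem chainSum_singleton (a : α) : chainSum f [a] = 0 := rfl

@[simp] theorem chainSum_cons_cons (a b : α) (l : List α) :
    chainSum f (a :: b :: l) = f a b + chainSum f (b :: l) := rfl

theorem chainSum_append_cons : ∀ (l₁ : List α) (c : α) (l₂ : List α),
    chainSum f (l₁ ++ c :: l₂) = chainSum f (l₁ ++ [c]) + chainSum f (c :: l₂)
  | [], _, _ => by simp
  | [_], _, _ => by simp
  | a :: b :: l₁, c, l₂ => by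
    simp only [cons_append, chainSum_cons_cons, add_assoc]
    rw [← cons_append, chainSum_append_cons (b :: l₁) c l₂, cons_append]

theorem chainSum_map (r : β → α) : ∀ l : List β,
    chainSum f (l.map r) = chainSum (fun a b => f (r a) (r b)) l
  | [] => rfl
  | [_] => rfl
  | a :: b :: l => by
    simp only [map_cons, chainSum_cons_cons, ← chainSum_map r (b :: l), map_cons]

theorem chainSum_ofFn : ∀ {k : ℕ} (σ : Fin (k + 1) → α),
    chainSum f (ofFn σ) = ∑ i : Fin k, f (σ i.castSucc) (σ i.succ)
  | 0, _ => by simp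
  | k + 1, σ => by
    have ih := chainSum_ofFn fun i => σ i.succ
    rw [ofFn_succ] at ih
    rw [ofFn_succ, ofFn_succ, chainSum_cons_cons, ih, Fin.sum_univ_succ]
    rfl

end AddCommMonoid

section Ordered

variable [AddCommMonoid M] [PartialOrder M] [IsOrderedAddMonoid M] {f : α → α → M}
  {l₁ l₂ : List α} {c c' x y : α}

theorem chainSum_append_cons_le_replace (hL : ∀ x ∈ l₁.getLast?, f x c ≤ f x c')
    (hM : ∀ y ∈ l₂.head?, f c y ≤ f c' y) :
    chainSum f (l₁ ++ c :: l₂) ≤ chainSum f (l₁ ++ c' :: l₂) := by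
  rw [chainSum_append_cons f l₁ c, chainSum_append_cons f l₁ c']
  gcongr ?_ + ?_
  · obtain rfl | ⟨l₁, x, rfl⟩ := l₁.eq_nil_or_concat'
    · rfl
    rw [append_assoc, append_assoc, singleton_append, singleton_append,
      chainSum_append_cons f l₁ x [c], chainSum_append_cons f l₁ x [c']]
    simp only [chainSum_cons_cons, chainSum_singleton, add_zero]
    gcongr
    exact hL x (by simp)
  · cases l₂ with
    | nil => rfl
    | cons y l₂ =>
      simp only [chainSum_cons_cons]
      gcongr
      exact hM y rfl

theorem chainSum_append_cons_le_append (hx : l₁.getLast? = some x) (hy : l₂.head? = some y)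
    (h : f x c + f c y ≤ f x y) : chainSum f (l₁ ++ c :: l₂) ≤ chainSum f (l₁ ++ l₂) := by
  obtain ⟨l₁, rfl⟩ := getLast?_eq_some_iff.1 hx
  obtain ⟨l₂, rfl⟩ := head?_eq_some_iff.1 hy
  rw [append_assoc, append_assoc, singleton_append, singleton_append,
    chainSum_append_cons f l₁ x (c :: y :: l₂), chainSum_append_cons f l₁ x (y :: l₂)]
  simp only [chainSum_cons_cons, ← add_assoc (f x c)]
  gcongr

end Ordered

end List

namespace TVsSeq

open List Set

def IsSubdivision (N : ℕ) (l : List ℕ) : Prop :=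
  l.IsChain (· < ·) ∧ ∀ x ∈ l, x < N

noncomputable def jump (p : ℝ) (u : ℕ → ℝ) (a b : ℕ) : ℝ≥0∞ :=
  ENNReal.ofReal (|u b - u a| ^ p)

variable {p s : ℝ} {u : ℕ → ℝ} {N : ℕ}

theorem jump_comm (a b : ℕ) : jump p u a b = jump p u b a := by
  rw [jump, jump, abs_sub_comm]

theorem jump_neg : jump p (-u) = jump p u := by
  ext a b
  simp only [jump, Pi.neg_apply, neg_sub_neg, abs_sub_comm]

theorem jump_le_jump_of_mem_uIcc (hp : 0 ≤ p) {a b b' : ℕ} (h : u b ∈ uIcc (u a) (u b')) :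
    jump p u a b ≤ jump p u a b' :=
  ENNReal.ofReal_le_ofReal <| Real.rpow_le_rpow (abs_nonneg _) (abs_sub_left_of_mem_uIcc h) hp

theorem jump_add_jump_le (hp : 1 ≤ p) {x c y : ℕ} (h : u c ∈ uIcc (u x) (u y)) :
    jump p u x c + jump p u c y ≤ jump p u x y := by
  have hsplit : |u y - u x| = |u c - u x| + |u y - u c| := by
    rw [← abs_add_eq_add_abs_iff (u c - u x) (u y - u c) |>.2, sub_add_sub_cancel']
    rcases mem_uIcc.1 h with h | h
    · exact Or.inl ⟨by linarith, by linarith⟩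
    · exact Or.inr ⟨by linarith, by linarith⟩
  rw [jump, jump, jump, ← ENNReal.ofReal_add (by positivity) (by positivity), hsplit]
  exact ENNReal.ofReal_le_ofReal <| Real.add_rpow_le_rpow_add (abs_nonneg _) (abs_nonneg _) hp

theorem eq_iSup_chainSum :
    TVsSeq s N u = ⨆ (l : List ℕ) (_ : IsSubdivision N l), chainSum (jump (1 / s) u) l := by
  refine le_antisymm (iSup_le fun k => iSup_le fun σ => iSup_le fun hσ => iSup_le fun hσN => ?_)
    (iSup₂_le fun l hl => ?_)
  · refine le_iSup₂_of_le (ofFn σ) ⟨?_, ?_⟩ (chainSum_ofFn (jump (1 / s) u) σ).ge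
    · exact isChain_iff_pairwise.2 (pairwise_ofFn.2 fun i j hij => hσ hij)
    · intro x hx
      obtain ⟨i, rfl⟩ := mem_ofFn.1 hx
      exact hσN i
  · rcases l with _ | ⟨a, t⟩
    · simp
    obtain ⟨k, σ, hσ⟩ : ∃ k, ∃ σ : Fin (k + 1) → ℕ, ofFn σ = a :: t :=
      ⟨t.length, (a :: t).get, ofFn_get _⟩
    rw [← hσ] at hl ⊢
    refine le_iSup_of_le k <| le_iSup_of_le σ <| le_iSup_of_le ?_ <|
      le_iSup_of_le ?_ (chainSum_ofFn (jump (1 / s) u) σ).le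
    · exact fun i j hij => pairwise_ofFn.1 (isChain_iff_pairwise.1 hl.1) hij
    · exact fun i => hl.2 _ (mem_ofFn.2 ⟨i, rfl⟩)

theorem IsSubdivision.nodup {l : List ℕ} (hl : IsSubdivision N l) : l.Nodup :=
  (isChain_iff_pairwise.1 hl.1).nodup

theorem IsSubdivision.sublist {l l' : List ℕ} (hl : IsSubdivision N l) (h : l' <+ l) :
    IsSubdivision N l' :=
  ⟨hl.1.sublist h, fun x hx => hl.2 x (h.subset hx)⟩

theorem IsSubdivision.map {N' : ℕ} {r : ℕ → ℕ} (hr : StrictMono r) (hrN : ∀ j < N', r j < N)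
    {l : List ℕ} (hl : IsSubdivision N' l) : IsSubdivision N (l.map r) :=
  ⟨(isChain_map r).2 (hl.1.imp fun _ _ h => hr h), by simpa using fun j hj => hrN j (hl.2 j hj)⟩

theorem comp_le {N' : ℕ} {r : ℕ → ℕ} (hr : StrictMono r) (hrN : ∀ j < N', r j < N) :
    TVsSeq s N' (u ∘ r) ≤ TVsSeq s N u := by
  rw [eq_iSup_chainSum, eq_iSup_chainSum]
  exact iSup₂_le fun l hl =>
    le_iSup₂_of_le (l.map r) (hl.map hr hrN) (chainSum_map (jump (1 / s) u) r l).ge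

def succAbove (i j : ℕ) : ℕ :=
  if j < i then j else j + 1

theorem strictMono_succAbove (i : ℕ) : StrictMono (succAbove i) := by
  intro a b h
  simp only [succAbove]
  split_ifs <;> omega

theorem succAbove_lt {i j : ℕ} (hj : j < N - 1) : succAbove i j < N := by
  simp only [succAbove]
  split_ifs <;> omega

theorem IsSubdivision.exists_map_succAbove {i : ℕ} {l : List ℕ} (hl : IsSubdivision N l)
    (hi : i ∉ l) (hiN : i < N) : ∃ l', IsSubdivision (N - 1) l' ∧ l'.map (succAbove i) = l := by
  have hne : ∀ j ∈ l, j ≠ i := fun j hj h => hi (h ▸ hj)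
  set l' := l.map fun j => if j < i then j else j - 1
  have hmap : l'.map (succAbove i) = l := by
    rw [map_map]
    refine (map_congr_left fun j hj => ?_).trans (map_id l)
    have := hne j hj
    simp only [Function.comp, succAbove, id]
    split_ifs <;> omega
  refine ⟨l', ⟨?_, fun j hj => ?_⟩, hmap⟩
  · have hchain := hl.1
    rw [← hmap, isChain_map] at hchain
    exact hchain.imp fun _ _ => (strictMono_succAbove i).lt_iff_lt.1
  · obtain ⟨x, hx, rfl⟩ := mem_map.1 hj
    have := hl.2 x hx
    have := hne x hx
    split_ifs <;> omega

theorem IsSubdivision.exists_replace (hp : 0 ≤ p) {L M : List ℕ} {c c' : ℕ}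
    (hl : IsSubdivision N (L ++ c :: M)) (hc'N : c' < N) (hc' : c' ≠ c)
    (hL : ∀ x ∈ L.getLast?, x < c' ∧ u c ∈ uIcc (u x) (u c'))
    (hM : ∀ y ∈ M.head?, c' < y ∧ u c ∈ uIcc (u y) (u c')) :
    ∃ l', IsSubdivision N l' ∧ c ∉ l' ∧
      chainSum (jump p u) (L ++ c :: M) ≤ chainSum (jump p u) l' := by
  have hcLM : c ∉ L ++ M := (nodup_cons.1 (nodup_middle.1 hl.nodup)).1
  refine ⟨L ++ c' :: M, ⟨?_, fun x hx => ?_⟩, ?_, chainSum_append_cons_le_replace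
    (fun x hx => jump_le_jump_of_mem_uIcc hp (hL x hx).2) fun y hy => ?_⟩
  · obtain ⟨hLchain, hcM, -⟩ := isChain_append.1 hl.1
    refine isChain_append.2 ⟨hLchain, isChain_cons.2 ⟨fun y hy => (hM y hy).1, hcM.tail⟩, ?_⟩
    simpa using fun x hx => (hL x hx).1
  · obtain hx | rfl | hx : x ∈ L ∨ x = c' ∨ x ∈ M := by simpa using hx
    exacts [hl.2 x (by simp [hx]), hc'N, hl.2 x (by simp [hx])]
  · simpa [hc'.symm] using hcLM
  · rw [jump_comm, jump_comm c']
    exact jump_le_jump_of_mem_uIcc hp (hM y hy).2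

theorem IsSubdivision.exists_erase (hp : 1 ≤ p) {L M : List ℕ} {c x y : ℕ}
    (hl : IsSubdivision N (L ++ c :: M)) (hx : L.getLast? = some x) (hy : M.head? = some y)
    (h : u c ∈ uIcc (u x) (u y)) :
    ∃ l', IsSubdivision N l' ∧ c ∉ l' ∧
      chainSum (jump p u) (L ++ c :: M) ≤ chainSum (jump p u) l' :=
  ⟨L ++ M, hl.sublist ((sublist_cons_self c M).append_left L),
    (nodup_cons.1 (nodup_middle.1 hl.nodup)).1,
    chainSum_append_cons_le_append hx hy (jump_add_jump_le hp h)⟩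

theorem IsSubdivision.exists_notMem_of_lt (hp : 1 ≤ p) {l : List ℕ} {c : ℕ}
    (hl : IsSubdivision N l) (hcN : c + 1 < N) (h₁ : u (c - 1) < u c) (h₂ : u c < u (c + 1)) :
    ∃ l', IsSubdivision N l' ∧ c ∉ l' ∧ chainSum (jump p u) l ≤ chainSum (jump p u) l' := by
  by_cases hc : c ∈ l
  swap
  · exact ⟨l, hl, hc, le_rfl⟩
  obtain ⟨L, M, rfl⟩ := append_of_mem hc
  obtain ⟨hLc, hcM⟩ : (∀ x ∈ L.getLast?, x < c) ∧ ∀ y ∈ M.head?, c < y := by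
    obtain ⟨-, hcM, hLc⟩ := isChain_append.1 hl.1
    exact ⟨fun x hx => hLc x hx c rfl, (isChain_cons.1 hcM).1⟩
  by_cases hlow : (∀ x ∈ L.getLast?, u x ≤ u c) ∧ ∀ y ∈ M.head?, u y ≤ u c
  · refine hl.exists_replace (by linarith) hcN (by omega)
      (fun x hx => ⟨by linarith [hLc x hx], mem_uIcc.2 (Or.inl ⟨hlow.1 x hx, h₂.le⟩)⟩)
      fun y hy => ⟨?_, mem_uIcc.2 (Or.inl ⟨hlow.2 y hy, h₂.le⟩)⟩
    have hyc := hcM y hy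
    have : y ≠ c + 1 := by
      rintro rfl
      linarith [hlow.2 _ hy]
    omega
  by_cases hhigh : (∀ x ∈ L.getLast?, u c ≤ u x) ∧ ∀ y ∈ M.head?, u c ≤ u y
  · refine hl.exists_replace (by linarith) (by omega) (fun h => h₁.ne (congrArg u h))
      (fun x hx => ⟨?_, mem_uIcc.2 (Or.inr ⟨h₁.le, hhigh.1 x hx⟩)⟩)
      fun y hy => ⟨by have := hcM y hy; omega, mem_uIcc.2 (Or.inr ⟨h₁.le, hhigh.2 y hy⟩)⟩
    have hxc := hLc x hx
    have : x ≠ c - 1 := by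
      rintro rfl
      linarith [hhigh.1 _ hx]
    omega
  simp only [not_and_or, not_forall, not_le, exists_prop] at hlow hhigh
  rcases hlow with ⟨x, hx, hxc⟩ | ⟨y, hy, hyc⟩ <;>
    rcases hhigh with ⟨x', hx', hx'c⟩ | ⟨y', hy', hy'c⟩
  · cases Option.mem_unique hx hx'
    linarith
  · exact hl.exists_erase hp hx hy' (mem_uIcc.2 (Or.inr ⟨hy'c.le, hxc.le⟩))
  · exact hl.exists_erase hp hx' hy (mem_uIcc.2 (Or.inl ⟨hx'c.le, hyc.le⟩))
  · cases Option.mem_unique hy hy'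
    linarith

theorem IsSubdivision.exists_notMem (hp : 1 ≤ p) {l : List ℕ} {c : ℕ}
    (hl : IsSubdivision N l) (hcN : c + 1 < N)
    (hmono : (u (c - 1) < u c ∧ u c < u (c + 1)) ∨ (u (c + 1) < u c ∧ u c < u (c - 1))) :
    ∃ l', IsSubdivision N l' ∧ c ∉ l' ∧ chainSum (jump p u) l ≤ chainSum (jump p u) l' := by
  rcases hmono with ⟨h₁, h₂⟩ | ⟨h₁, h₂⟩
  · exact hl.exists_notMem_of_lt hp hcN h₁ h₂
  · simpa only [jump_neg] using
      hl.exists_notMem_of_lt (u := -u) hp hcN (neg_lt_neg h₂) (neg_lt_neg h₁)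

end TVsSeq

theorem tvsSeq_delete_strict_monotone_general (N : ℕ) (u : ℕ → ℝ) (s : ℝ)
    (hs0 : 0 < s) (hs1 : s ≤ 1) (i₀ : ℕ) (hi1 : 1 ≤ i₀) (hi2 : i₀ ≤ N - 2)
    (hmono : (u (i₀ - 1) < u i₀ ∧ u i₀ < u (i₀ + 1)) ∨
             (u (i₀ + 1) < u i₀ ∧ u i₀ < u (i₀ - 1))) :
    TVsSeq s N u = TVsSeq s (N - 1) (fun j => if j < i₀ then u j else u (j + 1)) := by
  have hp : 1 ≤ 1 / s := by rw [le_div_iff₀ hs0]; linarith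
  have hv : (fun j => if j < i₀ then u j else u (j + 1)) = u ∘ TVsSeq.succAbove i₀ :=
    funext fun j => (apply_ite u _ _ _).symm
  rw [hv]
  refine le_antisymm ?_
    (TVsSeq.comp_le (TVsSeq.strictMono_succAbove i₀) fun _ => TVsSeq.succAbove_lt)
  rw [TVsSeq.eq_iSup_chainSum, TVsSeq.eq_iSup_chainSum]
  refine iSup₂_le fun l hl => ?_
  obtain ⟨l', hl', hi₀, hle⟩ := hl.exists_notMem hp (by omega) hmono
  obtain ⟨l'', hl'', rfl⟩ := hl'.exists_map_succAbove hi₀ (by omega)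
  exact le_iSup₂_of_le l'' hl'' (hle.trans_eq (List.chainSum_map _ _ l''))

/-- Removing an interior entry at which a finite sequence is locally strictly monotone
does not change its `s`-fractional total variation. Here the sequence `u` has entries
`u 0, …, u (N-1)`, the interior index `i₀` satisfies `1 ≤ i₀ ≤ N - 2`, and the sequence
`v` obtained by deleting the entry `u i₀` has entries `v 0, …, v (N-2)`. -/
theorem tvsSeq_delete_strict_monotone (N : ℕ) (hN : 3 ≤ N) (u : ℕ → ℝ) (s : ℝ)
    (hs0 : 0 < s) (hs1 : s ≤ 1) (i₀ : ℕ) (hi1 : 1 ≤ i₀) (hi2 : i₀ ≤ N - 2)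
    (hmono : (u (i₀ - 1) < u i₀ ∧ u i₀ < u (i₀ + 1)) ∨
             (u (i₀ + 1) < u i₀ ∧ u i₀ < u (i₀ - 1))) :
    TVsSeq s N u = TVsSeq s (N - 1) (fun j => if j < i₀ then u j else u (j + 1)) :=
  tvsSeq_delete_strict_monotone_general N u s hs0 hs1 i₀ hi1 hi2 hmono
end

section
/- Let 0 < s ≤ 1 and let u : ℝ → ℝ satisfy TV^s u < +∞. Then u admits finite limits at infinity: both lim_{x→+∞} u(x) and lim_{x→−∞} u(x) exist in ℝ. -/
/-!
If `u` were not Cauchy at `+∞`, there would be an `ε > 0` and intervals `[a, b]` arbitrarily far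
to the right with `|u b - u a| ≥ ε`. Chaining `m` disjoint such intervals gives a partition whose
sum is at least `m ε ^ (1 / s)`, so `TVs s u = ∞`. The limit at `-∞` follows by reflecting
`x ↦ -x`, which does not increase `TVs s`.
-/

open scoped ENNReal

/-- The `s`-fractional total variation of a function `u : ℝ → ℝ`. -/
noncomputable def TVs (s : ℝ) (u : ℝ → ℝ) : ℝ≥0∞ :=
  ⨆ (n : ℕ) (x : Fin (n + 1) → ℝ) (_ : StrictMono x),
    ∑ i : Fin n, ENNReal.ofReal (|u (x i.succ) - u (x i.castSucc)| ^ (1 / s))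

noncomputable def partitionSum (s : ℝ) (u : ℝ → ℝ) {n : ℕ} (x : Fin (n + 1) → ℝ) : ℝ≥0∞ :=
  ∑ i : Fin n, ENNReal.ofReal (|u (x i.succ) - u (x i.castSucc)| ^ (1 / s))

section

variable {s : ℝ} {u : ℝ → ℝ}

theorem partitionSum_le_TVs {n : ℕ} {x : Fin (n + 1) → ℝ} (hx : StrictMono x) :
    partitionSum s u x ≤ TVs s u :=
  le_iSup_of_le n <| le_iSup_of_le x <| le_iSup_of_le hx le_rfl

theorem partitionSum_cons {n : ℕ} (a : ℝ) (x : Fin (n + 1) → ℝ) :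
    partitionSum s u (Fin.cons a x : Fin (n + 2) → ℝ) =
      ENNReal.ofReal (|u (x 0) - u a| ^ (1 / s)) + partitionSum s u x := by
  simp only [partitionSum, Fin.sum_univ_succ, Fin.cons_succ, Fin.castSucc_zero, Fin.cons_zero,
    ← Fin.succ_castSucc]

theorem partitionSum_comp_rev {n : ℕ} (x : Fin (n + 1) → ℝ) :
    partitionSum s (fun y => u (-y)) x = partitionSum s u (fun i => -x i.rev) := by
  refine Fintype.sum_equiv Fin.revPerm _ _ fun i => ?_
  simp only [Fin.revPerm_apply, Fin.rev_succ, Fin.rev_castSucc, Fin.rev_rev, abs_sub_comm]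

theorem TVs_comp_neg_le : TVs s (fun y => u (-y)) ≤ TVs s u :=
  iSup₂_le fun _ x => iSup_le fun hx => (partitionSum_comp_rev x).trans_le <|
    partitionSum_le_TVs fun _ _ hij => neg_lt_neg (hx (Fin.rev_lt_rev.mpr hij))

theorem exists_partitionSum_ge_nat_mul {c : ℝ≥0∞}
    (hjump : ∀ N, ∃ a b, N ≤ a ∧ a < b ∧ c ≤ ENNReal.ofReal (|u b - u a| ^ (1 / s)))
    (m : ℕ) (N : ℝ) :
    ∃ (n : ℕ) (x : Fin (n + 1) → ℝ), StrictMono x ∧ N ≤ x 0 ∧ m * c ≤ partitionSum s u x := by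
  induction m generalizing N with
  | zero => exact ⟨0, fun _ => N, Fin.strictMono_iff_lt_succ.mpr Fin.elim0, le_rfl, by simp⟩
  | succ m ih =>
    obtain ⟨a, b, hNa, hab, hc⟩ := hjump N
    obtain ⟨n, x, hx, hbx, hsum⟩ := ih (b + 1)
    refine ⟨n + 2, Fin.cons a (Fin.cons b x), ?_, hNa, ?_⟩
    · exact strictMono_vecCons.mpr ⟨hab, strictMono_vecCons.mpr ⟨by linarith, hx⟩⟩
    · rw [partitionSum_cons, partitionSum_cons, Nat.cast_succ, add_mul, one_mul, add_comm]
      exact add_le_add hc (le_add_left hsum)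

theorem TVs_eq_top_of_frequently_jumps (hs : 0 ≤ s) {ε : ℝ} (hε : 0 < ε)
    (hjump : ∀ N, ∃ a b, N ≤ a ∧ a < b ∧ ε ≤ |u b - u a|) : TVs s u = ⊤ := by
  by_contra hfin
  have hc : ENNReal.ofReal (ε ^ (1 / s)) ≠ 0 := by
    simpa using Real.rpow_pos_of_pos hε (1 / s)
  obtain ⟨m, hm⟩ := ENNReal.exists_nat_mul_gt hc hfin
  have hjump' : ∀ N, ∃ a b, N ≤ a ∧ a < b ∧
      ENNReal.ofReal (ε ^ (1 / s)) ≤ ENNReal.ofReal (|u b - u a| ^ (1 / s)) := by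
    intro N
    obtain ⟨a, b, hNa, hab, hε'⟩ := hjump N
    exact ⟨a, b, hNa, hab,
      ENNReal.ofReal_le_ofReal (Real.rpow_le_rpow hε.le hε' (by positivity))⟩
  obtain ⟨n, x, hx, -, hsum⟩ := exists_partitionSum_ge_nat_mul hjump' m 0
  exact (hsum.trans (partitionSum_le_TVs hx)).not_gt hm

theorem cauchySeq_of_TVs_ne_top (hs : 0 ≤ s) (hu : TVs s u ≠ ⊤) : CauchySeq u := by
  rw [Metric.cauchySeq_iff]
  intro ε hε
  by_contra! hjump
  refine hu (TVs_eq_top_of_frequently_jumps hs hε fun N => ?_)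
  obtain ⟨a, ha, b, hb, hab⟩ := hjump N
  have hab_ne : a ≠ b := by
    rintro rfl
    rw [dist_self] at hab
    linarith
  rcases hab_ne.lt_or_gt with h | h
  · exact ⟨a, b, ha, h, by rwa [Real.dist_eq, abs_sub_comm] at hab⟩
  · exact ⟨b, a, hb, h, by rwa [Real.dist_eq] at hab⟩

end

theorem bvs_limits_at_infinity_general (s : ℝ) (hs0 : 0 < s) (u : ℝ → ℝ)
    (hu : TVs s u < ⊤) :
    (∃ l : ℝ, Filter.Tendsto u Filter.atTop (nhds l)) ∧
    (∃ l : ℝ, Filter.Tendsto u Filter.atBot (nhds l)) := by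
  refine ⟨cauchySeq_tendsto_of_complete (cauchySeq_of_TVs_ne_top hs0.le hu.ne), ?_⟩
  obtain ⟨l, hl⟩ := cauchySeq_tendsto_of_complete
    (cauchySeq_of_TVs_ne_top hs0.le (TVs_comp_neg_le.trans_lt hu).ne)
  exact ⟨l, by simpa [Function.comp_def] using hl.comp Filter.tendsto_neg_atBot_atTop⟩

/-- **BV^s functions have limits at infinity**: if `TVs s u < ∞` with `0 < s ≤ 1`,
then `u` admits finite limits at `+∞` and at `-∞`. -/
theorem bvs_limits_at_infinity (s : ℝ) (hs0 : 0 < s) (hs1 : s ≤ 1) (u : ℝ → ℝ)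
    (hu : TVs s u < ⊤) :
    (∃ l : ℝ, Filter.Tendsto u Filter.atTop (nhds l)) ∧
    (∃ l : ℝ, Filter.Tendsto u Filter.atBot (nhds l)) :=
  bvs_limits_at_infinity_general s hs0 u hu
end

section
/- Let M > 1 and for each ν let ψ^ν : [0,∞) × ℝ → [0,∞) × ℝ be a homeomorphism such that both ψ^ν and its inverse (ψ^ν)^{−1} are Lipschitz with constant M, uniformly in ν, and such that ψ^ν is differentiable almost everywhere with 1/M ≤ |det D_{t,x} ψ^ν| ≤ M almost everywhere. Suppose y^ν → y in L¹_loc([0,∞) × ℝ) and ψ^ν → ψ uniformly on compact subsets of [0,∞) × ℝ. Then y^ν ∘ ψ^ν → y ∘ ψ in L¹_loc([0,∞) × ℝ). -/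
/-!
An `M`-antilipschitz map of the plane shrinks two-dimensional Hausdorff (= Lebesgue) measure by
at most the factor `M²`. Hence `∫_K F ∘ ψ ν ≤ M² ∫_{K'} F` for `F ≥ 0`, uniformly in `ν`, where
`K'` is one compact subset of the half-plane containing `ψlim '' K` and eventually every
`ψ ν '' K`. This bounds the `L¹(K)`-distance of `y ν ∘ ψ ν` and `ylim ∘ ψ ν` by `M²` times that
of `y ν` and `ylim` on `K'`. For `ylim ∘ ψ ν → ylim ∘ ψlim`, approximate `ylim` in `L¹(K')` by a
continuous compactly supported `g`: it is uniformly continuous, so `g ∘ ψ ν → g ∘ ψlim`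
uniformly on `K`.
-/

open scoped ENNReal NNReal Topology
open MeasureTheory Filter Set

section ChangeOfVariables

variable {L : ℝ≥0} {φ : ℝ × ℝ → ℝ × ℝ} {s : Set (ℝ × ℝ)}

theorem AntilipschitzWith.volume_le_mul_volume_image (hφ : AntilipschitzWith L (s.domRestrict φ))
    {t : Set (ℝ × ℝ)} (hts : t ⊆ s) : volume t ≤ (L : ℝ≥0∞) ^ 2 * volume (φ '' t) := by
  have key := hφ.le_hausdorffMeasure_image (d := 2) zero_le_two (((↑) : s → ℝ × ℝ) ⁻¹' t)
  rw [← isometry_subtype_coe.hausdorffMeasure_image (Or.inl zero_le_two), Set.domRestrict_eq,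
    image_comp, Subtype.image_preimage_coe, inter_eq_right.2 hts, hausdorffMeasure_prod_real,
    ENNReal.rpow_two] at key
  exact key

theorem AntilipschitzWith.map_restrict_le (hs : MeasurableSet s) (hc : ContinuousOn φ s)
    (hφ : AntilipschitzWith L (s.domRestrict φ)) :
    (volume.restrict s).map φ ≤ ((L : ℝ≥0∞) ^ 2) • volume.restrict (φ '' s) := by
  refine Measure.le_iff.2 fun B hB => ?_
  rw [Measure.map_apply_of_aemeasurable (hc.aemeasurable hs) hB, Measure.smul_apply,
    Measure.restrict_apply hB, Measure.restrict_apply' hs, smul_eq_mul]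
  calc volume (φ ⁻¹' B ∩ s) ≤ (L : ℝ≥0∞) ^ 2 * volume (φ '' (φ ⁻¹' B ∩ s)) :=
        hφ.volume_le_mul_volume_image inter_subset_right
    _ ≤ (L : ℝ≥0∞) ^ 2 * volume (B ∩ φ '' s) := by
        gcongr
        exact (image_inter_subset _ _ _).trans
          (inter_subset_inter_left _ (image_preimage_subset _ _))

theorem AntilipschitzWith.setLIntegral_comp_le (hs : MeasurableSet s) (hc : ContinuousOn φ s)
    (hφ : AntilipschitzWith L (s.domRestrict φ)) {t : Set (ℝ × ℝ)} (hst : MapsTo φ s t)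
    {f : ℝ × ℝ → ℝ≥0∞} (hf : Measurable f) :
    ∫⁻ p in s, f (φ p) ≤ (L : ℝ≥0∞) ^ 2 * ∫⁻ q in t, f q :=
  calc ∫⁻ p in s, f (φ p) = ∫⁻ q, f q ∂(volume.restrict s).map φ :=
        (lintegral_map' hf.aemeasurable (hc.aemeasurable hs)).symm
    _ ≤ ∫⁻ q, f q ∂(((L : ℝ≥0∞) ^ 2) • volume.restrict (φ '' s)) :=
        lintegral_mono' (hφ.map_restrict_le hs hc) le_rfl
    _ ≤ (L : ℝ≥0∞) ^ 2 * ∫⁻ q in t, f q := by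
        rw [lintegral_smul_measure, smul_eq_mul]
        gcongr
        exact hst.image_subset

end ChangeOfVariables

theorem ENNReal.tendsto_nhds_zero_of_forall_le_mul_add {ι : Type*} {l : Filter ι}
    {a : ι → ℝ≥0∞} {C : ℝ≥0∞} (hC : C ≠ ∞)
    (h : ∀ η > 0, ∃ c : ι → ℝ≥0∞, Tendsto c l (𝓝 0) ∧ ∀ᶠ i in l, a i ≤ η * C + c i) :
    Tendsto a l (𝓝 0) := by
  refine ENNReal.tendsto_nhds_zero.2 fun ε hε => ?_
  obtain ⟨η, hη, hηC⟩ := ENNReal.exists_pos_mul_lt hC (ENNReal.half_pos hε.ne').ne'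
  obtain ⟨c, hc, hac⟩ := h η hη
  filter_upwards [hac, ENNReal.tendsto_nhds_zero.1 hc (ε / 2) (ENNReal.half_pos hε.ne')]
    with i hai hci
  calc a i ≤ η * C + c i := hai
    _ ≤ ε / 2 + ε / 2 := add_le_add hηC.le hci
    _ = ε := ENNReal.add_halves ε

theorem TendstoUniformlyOn.tendsto_setLIntegral_edist {α β ι : Type*} [MeasurableSpace α]
    [PseudoEMetricSpace β] {μ : Measure α} {l : Filter ι} {F : ι → α → β} {f : α → β}
    {s : Set α} (h : TendstoUniformlyOn F f l s) (hμs : μ s ≠ ∞) :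
    Tendsto (fun i => ∫⁻ x in s, edist (f x) (F i x) ∂μ) l (𝓝 0) := by
  refine ENNReal.tendsto_nhds_zero.2 fun ε hε => ?_
  obtain ⟨δ, hδ, hδε⟩ := ENNReal.exists_pos_mul_lt hμs hε.ne'
  filter_upwards [EMetric.tendstoUniformlyOn_iff.1 h δ hδ] with i hi
  calc ∫⁻ x in s, edist (f x) (F i x) ∂μ ≤ ∫⁻ _ in s, δ ∂μ :=
        setLIntegral_mono measurable_const fun x hx => (hi x hx).le
    _ ≤ ε := by rw [setLIntegral_const]; exact hδε.le

theorem antilipschitzWith_of_tendsto {α β ι : Type*} [PseudoMetricSpace α] [PseudoMetricSpace β]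
    {l : Filter ι} [l.NeBot] {K : ℝ≥0} {F : ι → α → β} {f : α → β}
    (hF : ∀ i, AntilipschitzWith K (F i)) (hlim : ∀ x, Tendsto (fun i => F i x) l (𝓝 (f x))) :
    AntilipschitzWith K f :=
  antilipschitzWith_iff_le_mul_dist.2 fun x y =>
    ge_of_tendsto' (tendsto_const_nhds.mul ((hlim x).dist (hlim y))) fun i =>
      (hF i).le_mul_dist x y

theorem TendstoUniformlyOn.eventually_mapsTo_cthickening {α β ι : Type*} [PseudoMetricSpace β]
    {l : Filter ι} {F : ι → α → β} {f : α → β} {s : Set α} (h : TendstoUniformlyOn F f l s)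
    {δ : ℝ} (hδ : 0 < δ) : ∀ᶠ i in l, MapsTo (F i) s (Metric.cthickening δ (f '' s)) := by
  filter_upwards [Metric.tendstoUniformlyOn_iff.1 h δ hδ] with i hi x hx
  exact Metric.mem_cthickening_of_dist_le _ _ _ _ (mem_image_of_mem f hx)
    (by rw [dist_comm]; exact (hi x hx).le)

section Composition

variable {E : Type*} [NormedAddCommGroup E] [MeasurableSpace E] [BorelSpace E]
  [SecondCountableTopology E] {L : ℝ≥0} {K K' : Set (ℝ × ℝ)}

theorem AntilipschitzWith.setLIntegral_edist_comp_le {φ₁ : ℝ × ℝ → ℝ × ℝ} (hK : MeasurableSet K)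
    (hc : ContinuousOn φ₁ K) (hφ₁ : AntilipschitzWith L (K.domRestrict φ₁))
    (hmaps : MapsTo φ₁ K K') {f₁ f₂ : ℝ × ℝ → E} (hf₁ : Measurable f₁) (hf₂ : Measurable f₂)
    (h : ℝ × ℝ → E) :
    ∫⁻ p in K, edist (f₁ (φ₁ p)) (h p) ≤
      (L : ℝ≥0∞) ^ 2 * (∫⁻ q in K', edist (f₁ q) (f₂ q)) + ∫⁻ p in K, edist (f₂ (φ₁ p)) (h p) :=
  calc ∫⁻ p in K, edist (f₁ (φ₁ p)) (h p)
      ≤ ∫⁻ p in K, (edist (f₁ (φ₁ p)) (f₂ (φ₁ p)) + edist (f₂ (φ₁ p)) (h p)) :=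
        lintegral_mono fun _ => edist_triangle _ _ _
    _ = (∫⁻ p in K, edist (f₁ (φ₁ p)) (f₂ (φ₁ p))) + ∫⁻ p in K, edist (f₂ (φ₁ p)) (h p) :=
        lintegral_add_left' (f := fun p => edist (f₁ (φ₁ p)) (f₂ (φ₁ p)))
          ((hf₁.edist hf₂).comp_aemeasurable (hc.aemeasurable hK)) _
    _ ≤ _ := add_le_add_left (hφ₁.setLIntegral_comp_le hK hc hmaps (hf₁.edist hf₂)) _

variable [NormedSpace ℝ E] {ι : Type*} {l : Filter ι} {φ : ι → ℝ × ℝ → ℝ × ℝ}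
  {φlim : ℝ × ℝ → ℝ × ℝ}

theorem tendsto_setLIntegral_edist_comp_of_tendstoUniformlyOn (hK : IsCompact K)
    (hφ : TendstoUniformlyOn φ φlim l K) (hc : ∀ i, ContinuousOn (φ i) K)
    (hanti : ∀ i, AntilipschitzWith L (K.domRestrict (φ i))) (hmaps : ∀ᶠ i in l, MapsTo (φ i) K K')
    (hclim : ContinuousOn φlim K) (hantilim : AntilipschitzWith L (K.domRestrict φlim))
    (hmapslim : MapsTo φlim K K') {f : ℝ × ℝ → E} (hf : Measurable f) (hfi : IntegrableOn f K') :
    Tendsto (fun i => ∫⁻ p in K, edist (f (φ i p)) (f (φlim p))) l (𝓝 0) := by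
  refine ENNReal.tendsto_nhds_zero_of_forall_le_mul_add (C := 2 * (L : ℝ≥0∞) ^ 2)
    (by finiteness) fun η hη => ?_
  obtain ⟨g, hg_supp, hfg, hg_cont, -⟩ := hfi.exists_hasCompactSupport_lintegral_sub_le hη.ne'
  have hfg' : ∫⁻ q in K', edist (f q) (g q) ≤ η := by simpa only [edist_eq_enorm_sub] using hfg
  refine ⟨fun i => ∫⁻ p in K, edist (g (φlim p)) (g (φ i p)), ?_, ?_⟩
  · exact ((hg_supp.uniformContinuous_of_continuous hg_cont).comp_tendstoUniformlyOn
      hφ).tendsto_setLIntegral_edist hK.measure_lt_top.ne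
  filter_upwards [hmaps] with i hi
  calc ∫⁻ p in K, edist (f (φ i p)) (f (φlim p))
      ≤ (L : ℝ≥0∞) ^ 2 * (∫⁻ q in K', edist (f q) (g q)) +
          ∫⁻ p in K, edist (g (φ i p)) (f (φlim p)) :=
        (hanti i).setLIntegral_edist_comp_le hK.measurableSet (hc i) hi hf
          hg_cont.measurable _
    _ ≤ (L : ℝ≥0∞) ^ 2 * (∫⁻ q in K', edist (f q) (g q)) +
          ((L : ℝ≥0∞) ^ 2 * (∫⁻ q in K', edist (f q) (g q)) +
            ∫⁻ p in K, edist (g (φlim p)) (g (φ i p))) := by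
        simp_rw [edist_comm (g (φ i _))]
        exact add_le_add_right (hantilim.setLIntegral_edist_comp_le hK.measurableSet hclim
          hmapslim hf hg_cont.measurable _) _
    _ ≤ η * (2 * (L : ℝ≥0∞) ^ 2) + ∫⁻ p in K, edist (g (φlim p)) (g (φ i p)) := by
        rw [← add_assoc, ← two_mul, mul_comm η, mul_assoc]
        gcongr

theorem tendsto_setLIntegral_edist_comp_comp (hK : IsCompact K)
    (hφ : TendstoUniformlyOn φ φlim l K) (hc : ∀ i, ContinuousOn (φ i) K)
    (hanti : ∀ i, AntilipschitzWith L (K.domRestrict (φ i))) (hmaps : ∀ᶠ i in l, MapsTo (φ i) K K')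
    (hclim : ContinuousOn φlim K) (hantilim : AntilipschitzWith L (K.domRestrict φlim))
    (hmapslim : MapsTo φlim K K') {f : ι → ℝ × ℝ → E} {flim : ℝ × ℝ → E}
    (hf : ∀ i, Measurable (f i)) (hflim : Measurable flim) (hflimi : IntegrableOn flim K')
    (hfconv : Tendsto (fun i => ∫⁻ q in K', edist (f i q) (flim q)) l (𝓝 0)) :
    Tendsto (fun i => ∫⁻ p in K, edist (f i (φ i p)) (flim (φlim p))) l (𝓝 0) := by
  have hbound := (ENNReal.Tendsto.const_mul (a := (L : ℝ≥0∞) ^ 2) hfconv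
    (Or.inr (by finiteness))).add
    (tendsto_setLIntegral_edist_comp_of_tendstoUniformlyOn hK hφ hc hanti hmaps hclim hantilim
      hmapslim hflim hflimi)
  rw [mul_zero, add_zero] at hbound
  refine tendsto_of_tendsto_of_tendsto_of_le_of_le' tendsto_const_nhds hbound
    (Eventually.of_forall fun _ => zero_le) ?_
  filter_upwards [hmaps] with i hi
  exact (hanti i).setLIntegral_edist_comp_le hK.measurableSet (hc i) hi (hf i) hflim _

end Composition

theorem integral_abs_sub_eq_toReal_lintegral_edist {α : Type*} [MeasurableSpace α]
    {μ : Measure α} {u v : α → ℝ} (h : AEStronglyMeasurable (u - v) μ) :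
    ∫ x, |u x - v x| ∂μ = (∫⁻ x, edist (u x) (v x) ∂μ).toReal := by
  simpa only [Pi.sub_apply, Real.norm_eq_abs, edist_eq_enorm_sub] using
    integral_norm_eq_lintegral_enorm h

theorem ofReal_integral_abs_sub_eq_lintegral_edist {α : Type*} [MeasurableSpace α]
    {μ : Measure α} {u v : α → ℝ} (h : Integrable (u - v) μ) :
    ENNReal.ofReal (∫ x, |u x - v x| ∂μ) = ∫⁻ x, edist (u x) (v x) ∂μ := by
  simpa only [Pi.sub_apply, Real.norm_eq_abs, edist_eq_enorm_sub] using
    ofReal_integral_norm_eq_lintegral_enorm h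

theorem comp_tendsto_L1loc_of_biLipschitz_general
    (M : ℝ)
    (D : Set (ℝ × ℝ)) (hD : D = {p : ℝ × ℝ | 0 ≤ p.1})
    (ψ : ℕ → ℝ × ℝ → ℝ × ℝ) (ψlim : ℝ × ℝ → ℝ × ℝ)
    (y : ℕ → ℝ × ℝ → ℝ) (ylim : ℝ × ℝ → ℝ)
    (hbij : ∀ ν, Set.BijOn (ψ ν) D D)
    (hlip : ∀ ν, LipschitzOnWith (Real.toNNReal M) (ψ ν) D)
    (hlipinv : ∀ ν, ∀ p ∈ D, ∀ q ∈ D, dist p q ≤ M * dist (ψ ν p) (ψ ν q))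
    (hmeas : ∀ ν, Measurable (y ν)) (hmeaslim : Measurable ylim)
    (hyint : ∀ K : Set (ℝ × ℝ), IsCompact K → K ⊆ D →
        (∀ ν, IntegrableOn (y ν) K) ∧ IntegrableOn ylim K)
    (hyconv : ∀ K : Set (ℝ × ℝ), IsCompact K → K ⊆ D →
        Filter.Tendsto (fun ν => ∫ p in K, |y ν p - ylim p|) Filter.atTop (nhds 0))
    (hψconv : ∀ K : Set (ℝ × ℝ), IsCompact K → K ⊆ D →
        TendstoUniformlyOn (fun ν => ψ ν) ψlim Filter.atTop K) :
    ∀ K : Set (ℝ × ℝ), IsCompact K → K ⊆ D →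
      Filter.Tendsto (fun ν => ∫ p in K, |y ν (ψ ν p) - ylim (ψlim p)|)
        Filter.atTop (nhds 0) := by
  intro K hK hKD
  have hDclosed : IsClosed D := hD ▸ isClosed_le continuous_const continuous_fst
  have hψK := hψconv K hK hKD
  have hc ν : ContinuousOn (ψ ν) K := (hlip ν).continuousOn.mono hKD
  have hclim : ContinuousOn ψlim K := hψK.continuousOn (Frequently.of_forall hc)
  have hanti ν : AntilipschitzWith M.toNNReal (K.domRestrict (ψ ν)) :=
    antilipschitzWith_iff_le_mul_dist.2 fun p q => (hlipinv ν p (hKD p.2) q (hKD q.2)).trans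
      (mul_le_mul_of_nonneg_right (Real.le_coe_toNNReal M) dist_nonneg)
  have hantilim := antilipschitzWith_of_tendsto hanti fun p => hψK.tendsto_at p.2
  set K' := Metric.cthickening 1 (ψlim '' K) ∩ D
  have hK' : IsCompact K' := (hK.image_of_continuousOn hclim).cthickening.inter_right hDclosed
  have hmapslim : MapsTo ψlim K K' := fun p hp =>
    ⟨Metric.self_subset_cthickening _ (mem_image_of_mem ψlim hp), hDclosed.mem_of_tendsto
      (hψK.tendsto_at hp) (Eventually.of_forall fun ν => (hbij ν).mapsTo (hKD hp))⟩
  have hmaps : ∀ᶠ ν in atTop, MapsTo (ψ ν) K K' :=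
    (hψK.eventually_mapsTo_cthickening one_pos).mono fun ν h =>
      h.inter ((hbij ν).mapsTo.mono_left hKD)
  obtain ⟨hyK', hylimK'⟩ := hyint K' hK' inter_subset_right
  have hyconv' : Tendsto (fun ν => ∫⁻ q in K', edist (y ν q) (ylim q)) atTop (𝓝 0) := by
    simpa only [ofReal_integral_abs_sub_eq_lintegral_edist ((hyK' _).sub hylimK'),
      ENNReal.ofReal_zero] using ENNReal.tendsto_ofReal (hyconv K' hK' inter_subset_right)
  have key := tendsto_setLIntegral_edist_comp_comp hK hψK hc hanti hmaps hclim hantilim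
    hmapslim hmeas hmeaslim hylimK' hyconv'
  refine ((ENNReal.tendsto_toReal ENNReal.zero_ne_top).comp key).congr fun ν => ?_
  refine (integral_abs_sub_eq_toReal_lintegral_edist ?_).symm
  exact (((hmeas ν).comp_aemeasurable ((hc ν).aemeasurable hK.measurableSet)).sub
    (hmeaslim.comp_aemeasurable (hclim.aemeasurable hK.measurableSet))).aestronglyMeasurable

/-- **Convergence of compositions along uniformly bi-Lipschitz changes of variables**:
on the half-plane `D = {(t,x) : t ≥ 0}`, let `ψ ν : D → D` be homeomorphisms (bijections
of `D`) that are Lipschitz with constant `M` together with their inverses, uniformly in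
`ν`, and whose a.e. Jacobian determinant is bounded between `1/M` and `M`. If `y ν → y`
in `L¹_loc(D)` and `ψ ν → ψlim` uniformly on compact subsets of `D`, then
`y ν ∘ ψ ν → y ∘ ψlim` in `L¹_loc(D)`. -/
theorem comp_tendsto_L1loc_of_biLipschitz
    (M : ℝ) (hM : 1 < M)
    (D : Set (ℝ × ℝ)) (hD : D = {p : ℝ × ℝ | 0 ≤ p.1})
    (ψ : ℕ → ℝ × ℝ → ℝ × ℝ) (ψlim : ℝ × ℝ → ℝ × ℝ)
    (y : ℕ → ℝ × ℝ → ℝ) (ylim : ℝ × ℝ → ℝ)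
    (hbij : ∀ ν, Set.BijOn (ψ ν) D D)
    (hlip : ∀ ν, LipschitzOnWith (Real.toNNReal M) (ψ ν) D)
    (hlipinv : ∀ ν, ∀ p ∈ D, ∀ q ∈ D, dist p q ≤ M * dist (ψ ν p) (ψ ν q))
    (hdet : ∀ ν, ∀ᵐ p ∂(volume.restrict D), ∃ A : (ℝ × ℝ) →L[ℝ] (ℝ × ℝ),
        HasFDerivAt (ψ ν) A p ∧ 1 / M ≤ |A.det| ∧ |A.det| ≤ M)
    (hmeas : ∀ ν, Measurable (y ν)) (hmeaslim : Measurable ylim)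
    (hyint : ∀ K : Set (ℝ × ℝ), IsCompact K → K ⊆ D →
        (∀ ν, IntegrableOn (y ν) K) ∧ IntegrableOn ylim K)
    (hyconv : ∀ K : Set (ℝ × ℝ), IsCompact K → K ⊆ D →
        Filter.Tendsto (fun ν => ∫ p in K, |y ν p - ylim p|) Filter.atTop (nhds 0))
    (hψconv : ∀ K : Set (ℝ × ℝ), IsCompact K → K ⊆ D →
        TendstoUniformlyOn (fun ν => ψ ν) ψlim Filter.atTop K) :
    ∀ K : Set (ℝ × ℝ), IsCompact K → K ⊆ D →
      Filter.Tendsto (fun ν => ∫ p in K, |y ν (ψ ν p) - ylim (ψlim p)|)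
        Filter.atTop (nhds 0) :=
  comp_tendsto_L1loc_of_biLipschitz_general M D hD ψ ψlim y ylim hbij hlip hlipinv hmeas hmeaslim
    hyint hyconv hψconv
end

section
/- Let M > 1 and let γ : [0,∞) × ℝ → ℝ be a function such that (i) for all t ≥ 0 and all x < y, (y − x)/M ≤ γ(t,y) − γ(t,x) ≤ M (y − x), and (ii) for all x ∈ ℝ and all t, t' ≥ 0, |γ(t,x) − γ(t',x)| ≤ M |t − t'|. Then the map φ(t,x) := (t, γ(t,x)) is a bijection of [0,∞) × ℝ onto itself, both φ and φ^{−1} are Lipschitz, and at every point (t,x) where γ is differentiable one has det D_{t,x} φ(t,x) = ∂_x γ(t,x) ∈ [1/M, M]; moreover at the corresponding point φ(t,x), the inverse satisfies det D_{t,x} φ^{−1}(φ(t,x)) = 1/∂_x γ(t,x) ∈ [1/M, M]. In particular φ is a bi-Lipschitz homeomorphism whose Jacobian determinant is bounded above and below by positive constants almost everywhere. -/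
/-!
Each time slice `γ t` has difference quotients in `[1/M, M]`, so it is bi-Lipschitz and, being
continuous and unbounded in both directions, onto `ℝ`; hence `φ` is inverted slice by slice,
`φ⁻¹ (t, y) = (t, (γ t)⁻¹ y)`. Lipschitz bounds in space and in time for a family of slices add
up to a Lipschitz bound for the map `(t, x) ↦ (t, γ t x)`, and the inverse family satisfies such
bounds too: `|h t y - h s y| ≤ M |γ s (h t y) - γ t (h t y)| ≤ M² |t - s|` for `h t = (γ t)⁻¹`.
Since `φ` preserves time, `Dφ` is triangular with determinant `∂ₓγ`, a limit of difference
quotients and therefore in `[1/M, M]`; the chain rule for `φ⁻¹ ∘ φ = id` gives the inverse.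
-/

open Set Filter Function
open scoped NNReal

def IncrementsBetween (M : ℝ) (f : ℝ → ℝ) : Prop :=
  ∀ x y, x < y → (y - x) / M ≤ f y - f x ∧ f y - f x ≤ M * (y - x)

theorem Real.dist_eq_dist_mul_abs_slope (f : ℝ → ℝ) (x y : ℝ) :
    dist (f x) (f y) = dist x y * |slope f y x| := by
  rw [Real.dist_eq, Real.dist_eq, ← abs_mul, ← smul_eq_mul, sub_smul_slope, vsub_eq_sub]

namespace IncrementsBetween

variable {M : ℝ} {f : ℝ → ℝ}

theorem slope_mem_Icc (hf : IncrementsBetween M f) {x y : ℝ} (hxy : x ≠ y) :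
    slope f x y ∈ Icc M⁻¹ M := by
  wlog hlt : x < y generalizing x y
  · rw [slope_comm]
    exact this hxy.symm (hxy.lt_or_gt.resolve_left hlt)
  obtain ⟨hlo, hhi⟩ := hf x y hlt
  have hd : 0 < y - x := sub_pos.2 hlt
  rw [slope_def_field]
  constructor
  · rwa [le_div_iff₀ hd, inv_mul_eq_div]
  · rwa [div_le_iff₀ hd]

theorem dist_le_mul_dist (hf : IncrementsBetween M f) (hM : 0 < M) (x y : ℝ) :
    dist (f x) (f y) ≤ M * dist x y := by
  rcases eq_or_ne y x with rfl | hxy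
  · simp
  rw [Real.dist_eq_dist_mul_abs_slope, mul_comm M]
  obtain ⟨hlo, hhi⟩ := hf.slope_mem_Icc hxy
  rw [abs_of_pos (lt_of_lt_of_le (inv_pos.2 hM) hlo)]
  exact mul_le_mul_of_nonneg_left hhi dist_nonneg

theorem dist_le_mul_dist_apply (hf : IncrementsBetween M f) (hM : 0 < M) (x y : ℝ) :
    dist x y ≤ M * dist (f x) (f y) := by
  rcases eq_or_ne y x with rfl | hxy
  · simp
  rw [Real.dist_eq_dist_mul_abs_slope, ← mul_assoc, mul_comm M]
  obtain ⟨hlo, -⟩ := hf.slope_mem_Icc hxy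
  rw [abs_of_pos (lt_of_lt_of_le (inv_pos.2 hM) hlo)]
  have : 1 ≤ M * slope f y x := by rwa [← inv_le_iff_one_le_mul₀' hM]
  nlinarith [dist_nonneg (x := x) (y := y)]

theorem lipschitzWith (hf : IncrementsBetween M f) (hM : 0 < M) :
    LipschitzWith (Real.toNNReal M) f :=
  LipschitzWith.of_dist_le_mul fun x y => by
    rw [Real.coe_toNNReal _ hM.le]
    exact hf.dist_le_mul_dist hM x y

theorem antilipschitzWith (hf : IncrementsBetween M f) (hM : 0 < M) :
    AntilipschitzWith (Real.toNNReal M) f :=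
  AntilipschitzWith.of_le_mul_dist fun x y => by
    rw [Real.coe_toNNReal _ hM.le]
    exact hf.dist_le_mul_dist_apply hM x y

theorem tendsto_atTop (hf : IncrementsBetween M f) (hM : 0 < M) : Tendsto f atTop atTop := by
  refine tendsto_atTop_mono' _ ?_
    (tendsto_atTop_add_const_left _ (f 0) (tendsto_id.atTop_div_const hM))
  filter_upwards [eventually_gt_atTop 0] with x hx
  have := (hf 0 x hx).1
  rw [sub_zero] at this
  simp only [id]
  linarith

theorem tendsto_atBot (hf : IncrementsBetween M f) (hM : 0 < M) : Tendsto f atBot atBot := by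
  refine tendsto_atBot_mono' _ ?_
    (tendsto_atBot_add_const_left _ (f 0) (tendsto_id.atBot_div_const hM))
  filter_upwards [eventually_lt_atBot 0] with x hx
  have := (hf x 0 hx).1
  rw [zero_sub, neg_div] at this
  simp only [id]
  linarith

theorem bijective (hf : IncrementsBetween M f) (hM : 0 < M) : Bijective f :=
  ⟨(hf.antilipschitzWith hM).injective,
    (hf.lipschitzWith hM).continuous.surjective (hf.tendsto_atTop hM) (hf.tendsto_atBot hM)⟩

theorem mem_Icc_of_hasDerivAt (hf : IncrementsBetween M f) {b x : ℝ}
    (h : HasDerivAt f b x) : b ∈ Icc M⁻¹ M :=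
  isClosed_Icc.mem_of_tendsto (hasDerivAt_iff_tendsto_slope.1 h)
    (eventually_mem_nhdsWithin.mono fun _ hy => hf.slope_mem_Icc (Ne.symm hy))

end IncrementsBetween

theorem LipschitzOnWith.uncurry_prod {α β γ : Type*} [PseudoEMetricSpace α]
    [PseudoEMetricSpace β] [PseudoEMetricSpace γ] {f : α → β → γ} {s : Set α} {t : Set β}
    {Kα Kβ : ℝ≥0} (hα : ∀ b ∈ t, LipschitzOnWith Kα (f · b) s)
    (hβ : ∀ a ∈ s, LipschitzOnWith Kβ (f a) t) :
    LipschitzOnWith (Kα + Kβ) (uncurry f) (s ×ˢ t) := by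
  rintro ⟨a₁, b₁⟩ ⟨ha₁, hb₁⟩ ⟨a₂, b₂⟩ ⟨ha₂, hb₂⟩
  simp only [uncurry, ENNReal.coe_add, add_mul]
  refine (edist_triangle _ (f a₂ b₁) _).trans (add_le_add ?_ ?_)
  · exact (hα b₁ hb₁ ha₁ ha₂).trans (mul_right_mono (le_max_left _ _))
  · exact (hβ a₂ ha₂ hb₁ hb₂).trans (mul_right_mono (le_max_right _ _))

theorem ContinuousLinearMap.comp_eq_id_of_leftInvOn {𝕜 E F : Type*} [NontriviallyNormedField 𝕜]
    [NormedAddCommGroup E] [NormedSpace 𝕜 E] [NormedAddCommGroup F] [NormedSpace 𝕜 F]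
    {f : E → F} {g : F → E} {A : E →L[𝕜] F} {B : F →L[𝕜] E} {s : Set E} {p : E}
    (hA : HasFDerivAt f A p) (hB : HasFDerivAt g B (f p)) (hgf : LeftInvOn g f s)
    (hs : UniqueDiffWithinAt 𝕜 s p) (hp : p ∈ s) : B.comp A = ContinuousLinearMap.id 𝕜 E :=
  hs.eq (hB.comp p hA).hasFDerivWithinAt
    ((hasFDerivWithinAt_id p s).congr (fun _ hq => hgf hq) (hgf hp))

theorem ContinuousLinearMap.det_mul_det_eq_one_of_leftInvOn {E : Type*} [NormedAddCommGroup E]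
    [NormedSpace ℝ E] [FiniteDimensional ℝ E] {f g : E → E} {A B : E →L[ℝ] E} {s : Set E} {p : E}
    (hA : HasFDerivAt f A p) (hB : HasFDerivAt g B (f p)) (hgf : LeftInvOn g f s)
    (hs : UniqueDiffWithinAt ℝ s p) (hp : p ∈ s) : B.det * A.det = 1 := by
  rw [ContinuousLinearMap.det, ContinuousLinearMap.det, ← LinearMap.det_comp]
  change LinearMap.det (B.comp A : E →ₗ[ℝ] E) = 1
  rw [comp_eq_id_of_leftInvOn hA hB hgf hs hp]
  exact LinearMap.det_id

theorem lipschitzOnWith_rightInverse_of_antilipschitzWith {γ g : ℝ → ℝ → ℝ} {T : Set ℝ}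
    {Kt Kx : ℝ≥0} (ht : ∀ x, LipschitzOnWith Kt (γ · x) T)
    (hx : ∀ t ∈ T, AntilipschitzWith Kx (γ t)) (hr : ∀ t ∈ T, RightInverse (g t) (γ t))
    (y : ℝ) : LipschitzOnWith (Kx * Kt) (g · y) T :=
  LipschitzOnWith.of_dist_le_mul fun t htT s hsT =>
    calc dist (g t y) (g s y)
      _ ≤ Kx * dist (γ s (g t y)) (γ s (g s y)) := (hx s hsT).le_mul_dist _ _
      _ = Kx * dist (γ s (g t y)) (γ t (g t y)) := by rw [hr s hsT y, hr t htT y]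
      _ ≤ Kx * (Kt * dist s t) := by gcongr; exact (ht _).dist_le_mul s hsT t htT
      _ = (Kx * Kt : ℝ≥0) * dist t s := by rw [NNReal.coe_mul, mul_assoc, dist_comm]

theorem inv_mem_Icc_inv_self {M b : ℝ} (hM : 0 < M) (hb : b ∈ Icc M⁻¹ M) :
    b⁻¹ ∈ Icc M⁻¹ M :=
  ⟨inv_anti₀ ((inv_pos.2 hM).trans_le hb.1) hb.2, by simpa using inv_anti₀ (inv_pos.2 hM) hb.1⟩

theorem ContinuousLinearMap.det_eq_snd_apply_of_fst_comp_eq {A : (ℝ × ℝ) →L[ℝ] ℝ × ℝ}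
    (hA : (ContinuousLinearMap.fst ℝ ℝ ℝ).comp A = ContinuousLinearMap.fst ℝ ℝ ℝ) :
    A.det = (A (0, 1)).2 := by
  have hfst (v : ℝ × ℝ) : (A v).1 = v.1 := congr($hA v)
  rw [ContinuousLinearMap.det, ← LinearMap.det_toMatrix (Module.Basis.finTwoProd ℝ),
    Matrix.det_fin_two]
  simp [LinearMap.toMatrix_apply, hfst]

def flowMap (γ : ℝ → ℝ → ℝ) (p : ℝ × ℝ) : ℝ × ℝ := (p.1, γ p.1 p.2)

namespace flowMap

variable {γ g : ℝ → ℝ → ℝ} {T : Set ℝ}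

theorem mapsTo (γ : ℝ → ℝ → ℝ) (T : Set ℝ) :
    MapsTo (flowMap γ) (Prod.fst ⁻¹' T) (Prod.fst ⁻¹' T) :=
  fun _ hp => hp

theorem invOn (hl : ∀ t ∈ T, LeftInverse (g t) (γ t)) (hr : ∀ t ∈ T, RightInverse (g t) (γ t)) :
    InvOn (flowMap g) (flowMap γ) (Prod.fst ⁻¹' T) (Prod.fst ⁻¹' T) :=
  ⟨fun p hp => congrArg (Prod.mk p.1) (hl p.1 hp p.2),
    fun p hp => congrArg (Prod.mk p.1) (hr p.1 hp p.2)⟩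

theorem lipschitzOnWith {Kt Kx : ℝ≥0} (ht : ∀ x, LipschitzOnWith Kt (γ · x) T)
    (hx : ∀ t ∈ T, LipschitzWith Kx (γ t)) :
    LipschitzOnWith (max 1 (Kt + Kx)) (flowMap γ) (Prod.fst ⁻¹' T) := by
  have hγ : LipschitzOnWith (Kt + Kx) (uncurry γ) (T ×ˢ univ) :=
    .uncurry_prod (fun x _ => ht x) (fun t ht => (hx t ht).lipschitzOnWith)
  rw [prod_univ] at hγ
  exact LipschitzWith.prod_fst.lipschitzOnWith.prodMk hγ

theorem fst_comp_eq_of_hasFDerivAt {A : (ℝ × ℝ) →L[ℝ] ℝ × ℝ} {p : ℝ × ℝ}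
    (hA : HasFDerivAt (flowMap γ) A p) :
    (ContinuousLinearMap.fst ℝ ℝ ℝ).comp A = ContinuousLinearMap.fst ℝ ℝ ℝ :=
  ((ContinuousLinearMap.fst ℝ ℝ ℝ).hasFDerivAt.comp p hA).unique
    (ContinuousLinearMap.fst ℝ ℝ ℝ).hasFDerivAt

theorem det_eq_of_hasFDerivAt {A : (ℝ × ℝ) →L[ℝ] ℝ × ℝ} {p : ℝ × ℝ}
    (hA : HasFDerivAt (flowMap γ) A p) : A.det = (A (0, 1)).2 :=
  ContinuousLinearMap.det_eq_snd_apply_of_fst_comp_eq (fst_comp_eq_of_hasFDerivAt hA)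

theorem hasDerivAt_of_hasFDerivAt {A : (ℝ × ℝ) →L[ℝ] ℝ × ℝ} {t x : ℝ}
    (hA : HasFDerivAt (flowMap γ) A (t, x)) : HasDerivAt (γ t) (A (0, 1)).2 x := by
  have hline : HasDerivAt (fun s : ℝ => ((t, s) : ℝ × ℝ)) (0, 1) x :=
    (hasDerivAt_const x t).prodMk (hasDerivAt_id x)
  exact (ContinuousLinearMap.snd ℝ ℝ ℝ).hasFDerivAt.comp_hasDerivAt x (hA.comp_hasDerivAt x hline)

end flowMap

/-- **The Lagrangian flow map is a bi-Lipschitz homeomorphism with controlled Jacobian**: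
suppose `γ : [0,∞) × ℝ → ℝ` is, for each time `t ≥ 0`, strictly increasing in `x` with
increments between `(y-x)/M` and `M (y-x)`, and is `M`-Lipschitz in time. Then
`φ (t,x) = (t, γ (t,x))` is a bijection of the half-plane `D = {(t,x) : t ≥ 0}` onto
itself, `φ` and its inverse are Lipschitz on `D`, and wherever `φ` is differentiable its
Jacobian determinant equals `∂ₓ γ ∈ [1/M, M]`, while the derivative of the inverse at the
image point has determinant `(∂ₓ γ)⁻¹ ∈ [1/M, M]`. -/
theorem characteristic_flow_biLipschitz
    (M : ℝ) (hM : 1 < M) (γ : ℝ → ℝ → ℝ)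
    (hx : ∀ t : ℝ, 0 ≤ t → ∀ x y : ℝ, x < y →
        (y - x) / M ≤ γ t y - γ t x ∧ γ t y - γ t x ≤ M * (y - x))
    (ht : ∀ x t t' : ℝ, 0 ≤ t → 0 ≤ t' → |γ t x - γ t' x| ≤ M * |t - t'|) :
    Set.BijOn (fun p : ℝ × ℝ => (p.1, γ p.1 p.2)) {p : ℝ × ℝ | 0 ≤ p.1}
      {p : ℝ × ℝ | 0 ≤ p.1} ∧
    (∃ K : NNReal, LipschitzOnWith K (fun p : ℝ × ℝ => (p.1, γ p.1 p.2))
      {p : ℝ × ℝ | 0 ≤ p.1}) ∧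
    (∃ g : ℝ × ℝ → ℝ × ℝ,
      Set.InvOn g (fun p : ℝ × ℝ => (p.1, γ p.1 p.2)) {p : ℝ × ℝ | 0 ≤ p.1}
        {p : ℝ × ℝ | 0 ≤ p.1} ∧
      ∃ K : NNReal, LipschitzOnWith K g {p : ℝ × ℝ | 0 ≤ p.1}) ∧
    (∀ t x : ℝ, 0 ≤ t → ∀ A : (ℝ × ℝ) →L[ℝ] (ℝ × ℝ),
      HasFDerivAt (fun p : ℝ × ℝ => (p.1, γ p.1 p.2)) A (t, x) →
      (A.det = (A (0, 1)).2 ∧ 1 / M ≤ (A (0, 1)).2 ∧ (A (0, 1)).2 ≤ M) ∧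
      (∀ g : ℝ × ℝ → ℝ × ℝ,
        Set.InvOn g (fun p : ℝ × ℝ => (p.1, γ p.1 p.2)) {p : ℝ × ℝ | 0 ≤ p.1}
          {p : ℝ × ℝ | 0 ≤ p.1} →
        ∀ B : (ℝ × ℝ) →L[ℝ] (ℝ × ℝ), HasFDerivAt g B (t, γ t x) →
          B.det = ((A (0, 1)).2)⁻¹ ∧ 1 / M ≤ B.det ∧ B.det ≤ M)) := by
  have hM0 : 0 < M := by linarith
  have hγ : ∀ t ∈ Ici (0 : ℝ), IncrementsBetween M (γ t) := hx
  have htime (x : ℝ) : LipschitzOnWith (Real.toNNReal M) (γ · x) (Ici 0) :=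
    LipschitzOnWith.of_dist_le_mul fun t ht' s hs => by
      simpa only [Real.coe_toNNReal _ hM0.le, Real.dist_eq] using ht x t s ht' hs
  set γinv : ℝ → ℝ → ℝ := fun t => invFun (γ t)
  have hright (t : ℝ) (h : t ∈ Ici 0) : RightInverse (γinv t) (γ t) :=
    rightInverse_invFun ((hγ t h).bijective hM0).2
  have hinv : InvOn (flowMap γinv) (flowMap γ) (Prod.fst ⁻¹' Ici 0) (Prod.fst ⁻¹' Ici 0) :=
    flowMap.invOn (fun t h => leftInverse_invFun ((hγ t h).bijective hM0).1) hright
  -- An inverse of `φ` is only known on the closed half-plane, so the chain rule is applied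
  -- within it; this needs unique derivatives there, including at `t = 0`.
  have hD : UniqueDiffOn ℝ (Prod.fst ⁻¹' Ici (0 : ℝ)) :=
    prod_univ (β := ℝ) ▸ (uniqueDiffOn_Ici 0).prod uniqueDiffOn_univ
  refine ⟨hinv.bijOn (flowMap.mapsTo _ _) (flowMap.mapsTo _ _),
    ⟨_, flowMap.lipschitzOnWith htime fun t h => (hγ t h).lipschitzWith hM0⟩,
    ⟨flowMap γinv, hinv, _, flowMap.lipschitzOnWith
      (lipschitzOnWith_rightInverse_of_antilipschitzWith htime
        (fun t h => (hγ t h).antilipschitzWith hM0) hright)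
      fun t h => ((hγ t h).antilipschitzWith hM0).to_rightInverse (hright t h)⟩,
    fun t x h A hA => ?_⟩
  have hb := (hγ t h).mem_Icc_of_hasDerivAt (flowMap.hasDerivAt_of_hasFDerivAt hA)
  have hdetA := flowMap.det_eq_of_hasFDerivAt hA
  refine ⟨⟨hdetA, one_div M ▸ hb.1, hb.2⟩, fun g hg B hB => ?_⟩
  have hdetB : B.det = ((A (0, 1)).2)⁻¹ := by
    rw [← hdetA]
    exact eq_inv_of_mul_eq_one_left
      (ContinuousLinearMap.det_mul_det_eq_one_of_leftInvOn hA hB hg.1 (hD _ h) h)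
  rw [hdetB, one_div]
  exact ⟨rfl, inv_mem_Icc_inv_self hM0 hb⟩
end
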